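/- arXiv:2505.09645 — 5 statements merged into one kernel-verified Lean document; each statement's English description precedes it below -/
import Mathlib

section
/- For all real numbers a ≤ b there exist constants C > 0 and T > 0 such that for every complex z with a ≤ Re z ≤ b and |Im z| ≥ T one has |D∞(z) − 1/(2z) + 1/(4z²)| ≤ C/|z|³. -/
set_option maxHeartbeats 1000000


/-- `D∞(z) = ∑_{k≥0} (−1)/((z−2k)(z−2k−1))`, the paired form of `∑_{j≥0} (−1)^j/(z−j)`. -/
noncomputable def Dinf (z : ℂ) : ℂ :=
  ∑' k : ℕ, (-1) / ((z - 2 * (k : ℂ)) * (z - 2 * (k : ℂ) - 1))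

lemma auxHasSum : HasSum (fun k : ℕ => (1:ℝ) / (((k:ℝ) + 1) * ((k:ℝ) + 2))) 1 := by
  rw [hasSum_iff_tendsto_nat_of_nonneg (fun k => by positivity)]
  have hsum : ∀ n : ℕ, ∑ k ∈ Finset.range n, (1:ℝ) / (((k:ℝ) + 1) * ((k:ℝ) + 2))
      = 1 - 1 / ((n:ℝ) + 1) := by
    intro n
    have h := Finset.sum_range_sub' (fun k : ℕ => (1:ℝ) / ((k:ℝ) + 1)) n
    have e : ∑ k ∈ Finset.range n, (1:ℝ) / (((k:ℝ) + 1) * ((k:ℝ) + 2))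
        = ∑ k ∈ Finset.range n, ((1:ℝ) / ((k:ℝ) + 1) - 1 / ((↑(k+1):ℝ) + 1)) := by
      apply Finset.sum_congr rfl
      intro k _
      have h1 : ((k:ℝ) + 1) ≠ 0 := by positivity
      have h2 : ((k:ℝ) + 1 + 1) ≠ 0 := by positivity
      push_cast
      rw [div_sub_div _ _ h1 h2, div_eq_div_iff (by positivity) (by positivity)]
      ring
    rw [e, h]
    norm_num
  simp only [hsum]
  have := tendsto_one_div_add_atTop_nhds_zero_nat (𝕜 := ℝ)
  have h2 : Filter.Tendsto (fun n : ℕ => 1 - 1/((n:ℝ)+1)) Filter.atTop (nhds (1 - 0)) :=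
    Filter.Tendsto.sub tendsto_const_nhds this
  simpa using h2

theorem stmt4 (a b : ℝ) (hab : a ≤ b) :
    ∃ C > 0, ∃ T > 0, ∀ z : ℂ, a ≤ z.re → z.re ≤ b → T ≤ |z.im| →
      ‖Dinf z - 1 / (2 * z) + 1 / (4 * z ^ 2)‖ ≤ C / ‖z‖ ^ 3 := by
  set M := max |a| |b| with hM
  have hM0 : 0 ≤ M := le_trans (abs_nonneg a) (le_max_left _ _)
  have hbM : b ≤ M := le_trans (le_abs_self b) (le_max_right _ _)
  have haM : -M ≤ a := by
    have h1 : |a| ≤ M := le_max_left _ _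
    have h2 : -a ≤ |a| := neg_le_abs a
    linarith
  refine ⟨8, by norm_num, M + 3, by linarith, ?_⟩
  intro z ha hb ht
  set t := |z.im| with htdef
  have htM : M + 3 ≤ t := ht
  have ht3 : (3:ℝ) ≤ t := by linarith
  have ht0 : (0:ℝ) < t := by linarith
  -- key lower bounds on |z - c|
  have hkey : ∀ c : ℝ, t ≤ ‖z - c‖ ∧ c + 3 ≤ 2 * ‖z - c‖ := by
    intro c
    have h1 : |(z - (c:ℂ)).im| ≤ ‖z - c‖ := Complex.abs_im_le_norm _
    have h2 : |(z - (c:ℂ)).re| ≤ ‖z - c‖ := Complex.abs_re_le_norm _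
    have e1 : (z - (c:ℂ)).im = z.im := by simp
    have e2 : (z - (c:ℂ)).re = z.re - c := by simp
    rw [e1] at h1
    rw [e2] at h2
    have h3 : c - z.re ≤ |z.re - c| := by rw [abs_sub_comm]; exact le_abs_self _
    refine ⟨h1, ?_⟩
    have h4 : z.re + 3 ≤ t := by linarith
    linarith
  -- per-k bounds
  have hA : ∀ k : ℕ, t ≤ ‖z - 2*(k:ℂ)‖ ∧ (k:ℝ) + 1 ≤ ‖z - 2*(k:ℂ)‖ := by
    intro k
    have h := hkey (2*k)
    have e : z - ((2*(k:ℝ) : ℝ):ℂ) = z - 2*(k:ℂ) := by push_cast; ring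
    rw [e] at h
    exact ⟨h.1, by push_cast at h ⊢; linarith [h.2]⟩
  have hB : ∀ k : ℕ, t ≤ ‖z - 2*(k:ℂ) - 1‖ ∧
      (k:ℝ) + 2 ≤ ‖z - 2*(k:ℂ) - 1‖ := by
    intro k
    have h := hkey (2*k + 1)
    have e : z - ((2*(k:ℝ) + 1 : ℝ):ℂ) = z - 2*(k:ℂ) - 1 := by push_cast; ring
    rw [e] at h
    exact ⟨h.1, by push_cast at h ⊢; linarith [h.2]⟩
  have hC : ∀ k : ℕ, t ≤ ‖z - 2*(k:ℂ) - 2‖ ∧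
      (k:ℝ) + 2 ≤ ‖z - 2*(k:ℂ) - 2‖ := by
    intro k
    have h := hkey (2*k + 2)
    have e : z - ((2*(k:ℝ) + 2 : ℝ):ℂ) = z - 2*(k:ℂ) - 2 := by push_cast; ring
    rw [e] at h
    exact ⟨h.1, by push_cast at h ⊢; linarith [h.2]⟩
  have nz : ∀ w : ℂ, t ≤ ‖w‖ → w ≠ 0 := by
    intro w h hw
    rw [hw] at h; simp at h; linarith
  -- the three sequences
  set f : ℕ → ℂ := fun k => (-1) / ((z - 2*(k:ℂ)) * (z - 2*(k:ℂ) - 1)) with hfdef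
  set g : ℕ → ℂ := fun k => 1/(2*(z - 2*(k:ℂ))) - 1/(4*(z - 2*(k:ℂ))^2) with hgdef
  set d : ℕ → ℂ := fun k =>
    -1/((z - 2*(k:ℂ))^2 * (z - 2*(k:ℂ) - 1) * (z - 2*(k:ℂ) - 2)^2) with hddef
  -- key algebraic identity
  have hid : ∀ k : ℕ, f k = (g k - g (k+1)) + d k := by
    intro k
    have n0 : z - 2*(k:ℂ) ≠ 0 := nz _ (hA k).1
    have n1 : z - 2*(k:ℂ) - 1 ≠ 0 := nz _ (hB k).1
    have n2 : z - 2*(k:ℂ) - 2 ≠ 0 := nz _ (hC k).1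
    simp only [hfdef, hgdef, hddef]
    push_cast
    have e : z - 2*((k:ℂ)+1) = z - 2*(k:ℂ) - 2 := by ring
    rw [e]
    generalize hu : z - 2*(k:ℂ) = u at n0 n1 n2 ⊢
    have d1 : (2*u : ℂ) ≠ 0 := mul_ne_zero two_ne_zero n0
    have d2 : (4*u^2 : ℂ) ≠ 0 := mul_ne_zero (by norm_num : (4:ℂ) ≠ 0) (pow_ne_zero _ n0)
    have d3 : (2*(u-2) : ℂ) ≠ 0 := mul_ne_zero two_ne_zero n2
    have d4 : (4*(u-2)^2 : ℂ) ≠ 0 := mul_ne_zero (by norm_num : (4:ℂ) ≠ 0) (pow_ne_zero _ n2)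
    have D : (u^2*(u-1)*(u-2)^2 : ℂ) ≠ 0 :=
      mul_ne_zero (mul_ne_zero (pow_ne_zero _ n0) n1) (pow_ne_zero _ n2)
    rw [div_sub_div _ _ d1 d2, div_sub_div _ _ d3 d4,
      div_sub_div _ _ (mul_ne_zero d1 d2) (mul_ne_zero d3 d4),
      div_add_div _ _ (mul_ne_zero (mul_ne_zero d1 d2) (mul_ne_zero d3 d4)) D,
      div_eq_div_iff (mul_ne_zero n0 n1)
        (mul_ne_zero (mul_ne_zero (mul_ne_zero d1 d2) (mul_ne_zero d3 d4)) D)]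
    ring
  -- norm bounds
  have hfb : ∀ k : ℕ, ‖f k‖ ≤ 1 / (((k:ℝ)+1) * ((k:ℝ)+2)) := by
    intro k
    have hA2 := (hA k).2
    have hB2 := (hB k).2
    have hApos : (0:ℝ) < ‖z - 2*(k:ℂ)‖ := lt_of_lt_of_le ht0 (hA k).1
    have hBpos : (0:ℝ) < ‖z - 2*(k:ℂ) - 1‖ := lt_of_lt_of_le ht0 (hB k).1
    have : ‖f k‖ = 1 / (‖z - 2*(k:ℂ)‖ * ‖z - 2*(k:ℂ) - 1‖) := by
      simp only [hfdef, norm_div, map_div₀, map_mul]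
      simp
    rw [this]
    rw [div_le_div_iff₀ (by positivity) (by positivity)]
    nlinarith [mul_le_mul hA2 hB2 (by positivity) (le_of_lt hApos)]
  have hdb : ∀ k : ℕ, ‖d k‖ ≤ (1/t^3) * (1 / (((k:ℝ)+1) * ((k:ℝ)+2))) := by
    intro k
    set A := ‖z - 2*(k:ℂ)‖ with hAdef
    set B := ‖z - 2*(k:ℂ) - 1‖ with hBdef
    set Cc := ‖z - 2*(k:ℂ) - 2‖ with hCdef
    have hA1 := (hA k).1; have hA2 := (hA k).2
    have hB1 := (hB k).1
    have hC1 := (hC k).1; have hC2 := (hC k).2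
    have hApos : (0:ℝ) < A := lt_of_lt_of_le ht0 hA1
    have hBpos : (0:ℝ) < B := lt_of_lt_of_le ht0 hB1
    have hCpos : (0:ℝ) < Cc := lt_of_lt_of_le ht0 hC1
    have hnorm : ‖d k‖ = 1 / (A^2 * B * Cc^2) := by
      simp only [hddef, norm_div, map_div₀, map_mul, map_pow]
      simp [hAdef, hBdef, hCdef]
    rw [hnorm]
    have hrhs : (1/t^3) * (1 / (((k:ℝ)+1) * ((k:ℝ)+2)))
        = 1 / (t^3 * (((k:ℝ)+1) * ((k:ℝ)+2))) := by
      rw [div_mul_div_comm, one_mul]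
    rw [hrhs]
    apply one_div_le_one_div_of_le (by positivity)
    have p1 : t * ((k:ℝ)+1) ≤ A^2 := by nlinarith
    have p3 : t * ((k:ℝ)+2) ≤ Cc^2 := by nlinarith
    calc t^3 * (((k:ℝ)+1) * ((k:ℝ)+2))
        = (t * ((k:ℝ)+1)) * t * (t * ((k:ℝ)+2)) := by ring
      _ ≤ A^2 * B * Cc^2 := by
          apply mul_le_mul (mul_le_mul p1 hB1 (le_of_lt ht0) (by positivity)) p3
            (by positivity) (by positivity)
  -- summability
  have hmaj : Summable (fun k : ℕ => (1:ℝ) / (((k:ℝ)+1) * ((k:ℝ)+2))) := auxHasSum.summable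
  have hsf : Summable f := Summable.of_norm_bounded hmaj hfb
  have hsd : Summable d := Summable.of_norm_bounded (hmaj.mul_left (1/t^3)) hdb
  have hstel : Summable (fun k => g k - g (k+1)) := by
    have h := hsf.sub hsd
    have e : (fun k => f k - d k) = fun k => g k - g (k+1) := by
      funext k; rw [hid k]; ring
    rwa [e] at h
  -- telescoping: tsum of (g k - g (k+1)) = g 0
  have hg0 : Filter.Tendsto g Filter.atTop (nhds 0) := by
    have hgb : ∀ n : ℕ, ‖g n‖ ≤ 1/((n:ℝ)+1) := by
      intro n
      have hA1 := (hA n).1; have hA2 := (hA n).2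
      have hApos : (0:ℝ) < ‖z - 2*(n:ℂ)‖ := lt_of_lt_of_le ht0 hA1
      have hn1 : (0:ℝ) < (n:ℝ) + 1 := by positivity
      have h1 : ‖g n‖ ≤ ‖1/(2*(z - 2*(n:ℂ)))‖ + ‖1/(4*(z - 2*(n:ℂ))^2)‖ := norm_sub_le _ _
      have e1 : ‖(1:ℂ)/(2*(z - 2*(n:ℂ)))‖ = 1/(2 * ‖z - 2*(n:ℂ)‖) := by
        simp only [norm_div, map_div₀, map_mul]
        simp
      have e2 : ‖(1:ℂ)/(4*(z - 2*(n:ℂ))^2)‖ = 1/(4 * ‖z - 2*(n:ℂ)‖^2) := by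
        simp only [norm_div, map_div₀, map_mul, map_pow]
        simp
      rw [e1, e2] at h1
      have b1 : 1/(2 * ‖z - 2*(n:ℂ)‖) ≤ 1/(2*((n:ℝ)+1)) := by
        apply one_div_le_one_div_of_le (by positivity); linarith
      have b2 : 1/(4 * ‖z - 2*(n:ℂ)‖^2) ≤ 1/(2*((n:ℝ)+1)) := by
        apply one_div_le_one_div_of_le (by positivity)
        nlinarith
      calc ‖g n‖ ≤ 1/(2 * ‖z - 2*(n:ℂ)‖) + 1/(4 * ‖z - 2*(n:ℂ)‖^2) := h1
        _ ≤ 1/(2*((n:ℝ)+1)) + 1/(2*((n:ℝ)+1)) := add_le_add b1 b2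
        _ = 1/((n:ℝ)+1) := by
            rw [div_add_div _ _ (by positivity) (by positivity),
              div_eq_div_iff (by positivity) (by positivity)]
            ring
    exact squeeze_zero_norm hgb tendsto_one_div_add_atTop_nhds_zero_nat
  have htel : (∑' k, (g k - g (k+1))) = g 0 := by
    have h1 := hstel.hasSum.tendsto_sum_nat
    have e : (fun n => ∑ i ∈ Finset.range n, (g i - g (i+1))) = fun n => g 0 - g n :=
      funext (Finset.sum_range_sub' g)
    rw [e] at h1
    have h2 : Filter.Tendsto (fun n : ℕ => g 0 - g n) Filter.atTop (nhds (g 0 - 0)) :=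
      Filter.Tendsto.sub tendsto_const_nhds hg0
    have := tendsto_nhds_unique h1 h2
    rw [this, sub_zero]
  -- assemble
  have hD : Dinf z = ∑' k, f k := rfl
  have hsplit : (∑' k, f k) = (∑' k, (g k - g (k+1))) + ∑' k, d k := by
    rw [← hstel.tsum_add hsd]
    exact tsum_congr hid
  have hg0val : g 0 = 1/(2*z) - 1/(4*z^2) := by
    simp only [hgdef]
    norm_num
  have hmain : Dinf z - 1 / (2 * z) + 1 / (4 * z ^ 2) = ∑' k, d k := by
    rw [hD, hsplit, htel, hg0val]; ring
  rw [hmain]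
  -- final estimate
  have hzabs : ‖z‖ ≤ 2 * t := by
    have h1 : ‖z‖ ≤ |z.re| + |z.im| := Complex.norm_le_abs_re_add_abs_im z
    have h2 : |z.re| ≤ M := by
      rw [abs_le]; constructor <;> linarith
    linarith
  have hzpos : (0:ℝ) < ‖z‖ := by
    have := Complex.abs_im_le_norm z
    linarith
  have hbound : ‖∑' k, d k‖ ≤ 1/t^3 := by
    have h1 : ‖∑' k, d k‖ ≤ ∑' k, ‖d k‖ := norm_tsum_le_tsum_norm hsd.norm
    have h2 : (∑' k, ‖d k‖) ≤ ∑' k : ℕ, (1/t^3) * (1 / (((k:ℝ)+1) * ((k:ℝ)+2))) :=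
      Summable.tsum_le_tsum hdb hsd.norm (hmaj.mul_left (1/t^3))
    have h3 : (∑' k : ℕ, (1/t^3) * (1 / (((k:ℝ)+1) * ((k:ℝ)+2)))) = 1/t^3 := by
      rw [tsum_mul_left, auxHasSum.tsum_eq, mul_one]
    calc ‖∑' k, d k‖ ≤ ∑' k, ‖d k‖ := h1
      _ ≤ _ := h2
      _ = 1/t^3 := h3
  have hfinal : 1/t^3 ≤ 8 / ‖z‖ ^ 3 := by
    rw [div_le_div_iff₀ (by positivity) (by positivity)]
    have : ‖z‖ ^ 3 ≤ (2*t)^3 := pow_le_pow_left₀ (le_of_lt hzpos) hzabs 3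
    nlinarith
  linarith
end

section
/- The function D∞ has no real zeros. More precisely: for every integer p ≥ 0 and every real x with p < x < p+1, one has (−1)^p·D∞(x) > 0; and for every real x < 0, one has D∞(x) < 0. -/
open Filter Topology

noncomputable def DR (x : ℝ) : ℝ :=
  ∑' k : ℕ, (-1) / ((x - 2 * (k : ℝ)) * (x - 2 * (k : ℝ) - 1))

lemma summable_DR (x : ℝ) :
    Summable (fun k : ℕ => (-1) / ((x - 2 * (k : ℝ)) * (x - 2 * (k : ℝ) - 1))) := by
  obtain ⟨N, hN⟩ := exists_nat_gt (max x 0)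
  have hN1 : (1:ℝ) ≤ N := by
    have h0 := (le_max_right x 0).trans_lt hN
    have : (0:ℕ) < N := by exact_mod_cast h0
    exact_mod_cast this
  have hxN : x < N := (le_max_left x 0).trans_lt hN
  rw [← summable_nat_add_iff N]
  have hsq : Summable (fun k : ℕ => 1 / ((k:ℝ)+1) ^ 2) := by
    have h := Real.summable_one_div_nat_pow.mpr (one_lt_two)
    have h2 := (summable_nat_add_iff 1).mpr h
    exact h2.congr fun n => by push_cast; ring
  apply hsq.of_norm_bounded
  intro k
  have h1 : (k:ℝ) + 1 ≤ 2 * ((k + N : ℕ):ℝ) - x := by push_cast; nlinarith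
  have h2 : (k:ℝ) + 1 ≤ 2 * ((k + N : ℕ):ℝ) + 1 - x := by push_cast; nlinarith
  have hk1 : (0:ℝ) < (k:ℝ) + 1 := by positivity
  have hp : (0:ℝ) < (2 * ((k + N : ℕ):ℝ) - x) * (2 * ((k + N : ℕ):ℝ) + 1 - x) := by nlinarith
  have hnorm : ‖(-1) / ((x - 2 * ((k + N : ℕ):ℝ)) * (x - 2 * ((k + N : ℕ):ℝ) - 1))‖
      = 1 / ((2 * ((k + N : ℕ):ℝ) - x) * (2 * ((k + N : ℕ):ℝ) + 1 - x)) := by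
    rw [norm_div, norm_neg, norm_one, Real.norm_eq_abs,
      show (x - 2 * ((k + N : ℕ):ℝ)) * (x - 2 * ((k + N : ℕ):ℝ) - 1)
        = (2 * ((k + N : ℕ):ℝ) - x) * (2 * ((k + N : ℕ):ℝ) + 1 - x) by ring,
      abs_of_pos hp]
  rw [hnorm, div_le_div_iff₀ hp (by positivity)]
  nlinarith

lemma DR_neg {x : ℝ} (h : ∀ k : ℕ, 0 < (x - 2 * (k:ℝ)) * (x - 2 * (k:ℝ) - 1)) : DR x < 0 := by
  have hpos : 0 < ∑' k : ℕ, (1 : ℝ) / ((x - 2 * (k : ℝ)) * (x - 2 * (k : ℝ) - 1)) := by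
    refine Summable.tsum_pos ?_ (fun k => le_of_lt (by have := h k; positivity)) 0
      (by have := h 0; positivity)
    exact (summable_DR x).neg.congr fun k => by field_simp
  have hDR : DR x = -∑' k : ℕ, (1 : ℝ) / ((x - 2 * (k : ℝ)) * (x - 2 * (k : ℝ) - 1)) := by
    rw [DR, ← tsum_neg]
    exact tsum_congr fun k => by field_simp
  rw [hDR]; linarith

lemma DR_funeq {x : ℝ} (hx : ∀ n : ℕ, x ≠ n) : DR x + DR (x - 1) = 1 / x := by
  have hne : ∀ n : ℕ, x - (n:ℝ) ≠ 0 := by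
    intro n h
    exact hx n (by linarith [sub_eq_zero.mp h])
  have hA : ∀ k : ℕ, x - 2 * (k:ℝ) ≠ 0 := by
    intro k; have := hne (2*k); push_cast at this; exact this
  have hB : ∀ k : ℕ, x - 2 * (k:ℝ) - 1 ≠ 0 := by
    intro k h; have := hne (2*k+1); push_cast at this; apply this; linarith
  have hC : ∀ k : ℕ, x - 2 * (k:ℝ) - 2 ≠ 0 := by
    intro k h; have := hne (2*k+2); push_cast at this; apply this; linarith
  set H : ℕ → ℝ := fun n => 1 / (x - 2 * (n:ℝ)) with hH
  have key : ∀ k : ℕ,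
      (-1) / ((x - 2 * (k:ℝ)) * (x - 2 * (k:ℝ) - 1))
        + (-1) / (((x-1) - 2 * (k:ℝ)) * ((x-1) - 2 * (k:ℝ) - 1))
      = H k - H (k+1) := by
    intro k
    have h1 := hA k; have h2 := hB k; have h3 := hC k
    have h2' : (x-1) - 2 * (k:ℝ) ≠ 0 := by intro h; apply h2; linarith
    have h3' : (x-1) - 2 * (k:ℝ) - 1 ≠ 0 := by intro h; apply h3; linarith
    have h4 : x - 2 * ((k:ℝ)+1) ≠ 0 := by intro h; apply h3; linarith
    simp only [hH]
    push_cast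
    field_simp
    ring
  have hsum1 := summable_DR x
  have hsum2 := summable_DR (x-1)
  have hs : Summable (fun k : ℕ => H k - H (k+1)) :=
    (hsum1.add hsum2).congr key
  have hteq : DR x + DR (x-1) = ∑' k : ℕ, (H k - H (k+1)) := by
    rw [DR, DR, ← Summable.tsum_add hsum1 hsum2]
    exact tsum_congr key
  rw [hteq]
  have htendH : Tendsto H atTop (𝓝 0) := by
    have h1 : Tendsto (fun n : ℕ => 2 * (n:ℝ) + (-x)) atTop atTop :=
      tendsto_atTop_add_const_right _ (-x) (tendsto_natCast_atTop_atTop.const_mul_atTop two_pos)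
    have h2 := h1.inv_tendsto_atTop
    have h3 := h2.neg
    rw [neg_zero] at h3
    refine h3.congr fun n => ?_
    simp only [hH, Pi.inv_apply, one_div]
    rw [← inv_neg]
    ring_nf
  have hpartial : Tendsto (fun n : ℕ => ∑ i ∈ Finset.range n, (H i - H (i+1)))
      atTop (𝓝 (H 0)) := by
    have : ∀ n : ℕ, ∑ i ∈ Finset.range n, (H i - H (i+1)) = H 0 - H n := by
      intro n; exact Finset.sum_range_sub' H n
    simp only [this]
    simpa using tendsto_const_nhds.sub htendH
  have := tendsto_nhds_unique hs.hasSum.tendsto_sum_nat hpartial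
  rw [this]
  simp [hH]

lemma Dinf_eq (x : ℝ) : Dinf (x : ℂ) = ((DR x : ℝ) : ℂ) := by
  rw [DR, Complex.ofReal_tsum, Dinf]
  exact tsum_congr fun k => by push_cast; ring

theorem stmt12 :
    (∀ p : ℕ, ∀ x : ℝ, (p : ℝ) < x → x < (p : ℝ) + 1 →
      (Dinf (x : ℂ)).im = 0 ∧ 0 < (-1 : ℝ) ^ p * (Dinf (x : ℂ)).re) ∧
    (∀ x : ℝ, x < 0 → (Dinf (x : ℂ)).im = 0 ∧ (Dinf (x : ℂ)).re < 0) := by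
  constructor
  · intro p x hp1 hp2
    rw [Dinf_eq x, Complex.ofReal_im, Complex.ofReal_re]
    refine ⟨rfl, ?_⟩
    rcases Nat.even_or_odd p with he | ho
    · -- p even, p = 2m : show DR x > 0 via funeq
      obtain ⟨m, hm⟩ := he
      have hx0 : 0 < x := lt_of_le_of_lt (Nat.cast_nonneg p) hp1
      have hxnat : ∀ n : ℕ, x ≠ (n:ℝ) := by
        intro n h
        subst h
        have h1 : (p:ℝ) < (n:ℝ) := hp1
        have h2 : (n:ℝ) < (p:ℝ) + 1 := hp2
        have : p < n := by exact_mod_cast h1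
        have : n < p + 1 := by exact_mod_cast h2
        omega
      have hfun := DR_funeq hxnat
      have hneg : DR (x - 1) < 0 := by
        apply DR_neg
        intro k
        rcases lt_or_ge k m with hk | hk
        · have hk2 : 2 * (k:ℝ) + 2 ≤ (p:ℝ) := by
            have : 2 * k + 2 ≤ p := by omega
            exact_mod_cast this
          have : 0 < x - 1 - 2 * (k:ℝ) - 1 := by linarith
          nlinarith
        · have hk2 : (p:ℝ) + 1 ≤ 2 * (k:ℝ) + 1 := by
            have : p + 1 ≤ 2 * k + 1 := by omega
            exact_mod_cast this
          have : x - 1 - 2 * (k:ℝ) < 0 := by linarith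
          nlinarith
      have : 0 < DR x := by
        have h1x : 0 < 1 / x := by positivity
        linarith
      have hpow : (-1:ℝ)^p = 1 := Even.neg_one_pow ⟨m, hm⟩
      rw [hpow]; linarith
    · -- p odd, p = 2m+1 : all terms negative
      obtain ⟨m, hm⟩ := ho
      have hneg : DR x < 0 := by
        apply DR_neg
        intro k
        rcases le_or_gt k m with hk | hk
        · have hk2 : 2 * (k:ℝ) + 1 ≤ (p:ℝ) := by
            have : 2 * k + 1 ≤ p := by omega
            exact_mod_cast this
          have : 0 < x - 2 * (k:ℝ) - 1 := by linarith
          nlinarith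
        · have hk2 : (p:ℝ) + 1 ≤ 2 * (k:ℝ) := by
            have : p + 1 ≤ 2 * k := by omega
            exact_mod_cast this
          have : x - 2 * (k:ℝ) < 0 := by linarith
          nlinarith
      have hpow : (-1:ℝ)^p = -1 := Odd.neg_one_pow ⟨m, hm⟩
      rw [hpow]; linarith
  · intro x hx
    rw [Dinf_eq x, Complex.ofReal_im, Complex.ofReal_re]
    refine ⟨rfl, ?_⟩
    apply DR_neg
    intro k
    have h1 : x - 2 * (k:ℝ) < 0 := by
      have : (0:ℝ) ≤ 2 * (k:ℝ) := by positivity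
      linarith
    nlinarith
end

section
/- For every complex number z = x + iy with x ≤ 0 and y > 0 (and z ≠ 0), one has Im D∞(z) < 0. Consequently D∞(z) ≠ 0 for every complex z with Re z ≤ 0 that is not a nonnegative integer. -/
open Complex

private lemma dterm_summable {z : ℂ} (hre : z.re ≤ 0) :
    Summable (fun k : ℕ => (-1 : ℂ) / ((z - 2 * (k : ℂ)) * (z - 2 * (k : ℂ) - 1))) := by
  apply Summable.of_norm_bounded_eventually_nat (g := fun k : ℕ => 1 / ((k : ℝ)) ^ 2)
  · exact Real.summable_one_div_nat_pow.mpr one_lt_two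
  · refine Filter.eventually_atTop.mpr ⟨1, fun k hk => ?_⟩
    have hk1 : (1 : ℝ) ≤ (k : ℝ) := by exact_mod_cast hk
    have hk0 : (0 : ℝ) < (k : ℝ) := by exact_mod_cast hk
    have h1 : (k : ℝ) ≤ ‖z - 2 * (k : ℂ)‖ := by
      have h := Complex.abs_re_le_norm (z - 2 * (k : ℂ))
      have hre2 : (z - 2 * (k : ℂ)).re = z.re - 2 * k := by simp
      rw [hre2] at h
      have : (k : ℝ) ≤ |z.re - 2 * k| := by
        rw [abs_of_nonpos (by nlinarith)]
        nlinarith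
      linarith
    have h2 : (k : ℝ) ≤ ‖z - 2 * (k : ℂ) - 1‖ := by
      have h := Complex.abs_re_le_norm (z - 2 * (k : ℂ) - 1)
      have hre2 : (z - 2 * (k : ℂ) - 1).re = z.re - 2 * k - 1 := by simp
      rw [hre2] at h
      have : (k : ℝ) ≤ |z.re - 2 * k - 1| := by
        rw [abs_of_nonpos (by nlinarith)]
        nlinarith
      linarith
    rw [norm_div, norm_neg, norm_one, norm_mul]
    have hprod : (k : ℝ) ^ 2 ≤ ‖z - 2 * (k : ℂ)‖ * ‖z - 2 * (k : ℂ) - 1‖ := by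
      nlinarith
    exact one_div_le_one_div_of_le (by nlinarith) hprod

private lemma dterm_im_neg {z : ℂ} (hre : z.re ≤ 0) (him : 0 < z.im) (k : ℕ) :
    ((-1 : ℂ) / ((z - 2 * (k : ℂ)) * (z - 2 * (k : ℂ) - 1))).im < 0 := by
  set w : ℂ := z - 2 * (k : ℂ) with hw
  have hwim : w.im = z.im := by simp [hw]
  have hw0 : w ≠ 0 := by
    intro h
    have : z.im = 0 := by rw [← hwim, h, Complex.zero_im]
    linarith
  have hw1 : w - 1 ≠ 0 := by
    intro h
    have h2 : (w - 1).im = z.im := by simp [hw]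
    rw [h, Complex.zero_im] at h2
    linarith
  have key : (-1 : ℂ) / (w * (w - 1)) = w⁻¹ - (w - 1)⁻¹ := by
    field_simp
    ring
  rw [show z - 2 * (k : ℂ) - 1 = w - 1 from rfl, key]
  rw [Complex.sub_im, Complex.inv_im, Complex.inv_im]
  have hA : 0 < Complex.normSq w := Complex.normSq_pos.mpr hw0
  have hB : 0 < Complex.normSq (w - 1) := Complex.normSq_pos.mpr hw1
  have hAB : Complex.normSq w < Complex.normSq (w - 1) := by
    rw [Complex.normSq_apply, Complex.normSq_apply]
    have hre2 : (w - 1).re = w.re - 1 := by simp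
    have him2 : (w - 1).im = w.im := by simp
    have hwre : w.re ≤ 0 := by
      simp only [hw, Complex.sub_re, Complex.mul_re]
      simp
      nlinarith [hre, Nat.cast_nonneg (α := ℝ) k]
    rw [hre2, him2]
    nlinarith
  have h1 : z.im / Complex.normSq (w - 1) < z.im / Complex.normSq w :=
    div_lt_div_of_pos_left him hA hAB
  rw [hwim, show (w - 1).im = z.im by simp [hw]]
  have : -(z.im / Complex.normSq w) < -(z.im / Complex.normSq (w - 1)) := by linarith
  rw [neg_div, neg_div]
  linarith

private lemma im_Dinf_neg {z : ℂ} (hre : z.re ≤ 0) (him : 0 < z.im) : (Dinf z).im < 0 := by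
  have hsum := dterm_summable hre
  rw [Dinf, Complex.im_tsum hsum]
  have hsum' : Summable (fun k : ℕ =>
      ((-1 : ℂ) / ((z - 2 * (k : ℂ)) * (z - 2 * (k : ℂ) - 1))).im) :=
    (Complex.hasSum_im hsum.hasSum).summable
  have := Summable.tsum_lt_tsum (f := fun k : ℕ =>
      ((-1 : ℂ) / ((z - 2 * (k : ℂ)) * (z - 2 * (k : ℂ) - 1))).im)
      (g := fun _ : ℕ => (0 : ℝ)) (i := 0)
      (fun k => le_of_lt (dterm_im_neg hre him k)) (dterm_im_neg hre him 0)
      hsum' summable_zero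
  simpa using this

private lemma Dinf_conj (z : ℂ) :
    Dinf ((starRingEnd ℂ) z) = (starRingEnd ℂ) (Dinf z) := by
  rw [Dinf, Dinf, Complex.conj_tsum]
  refine tsum_congr fun k => ?_
  simp [map_div₀, map_ofNat]

private lemma re_Dinf_neg {z : ℂ} (hre : z.re < 0) (him : z.im = 0) : (Dinf z).re < 0 := by
  have hsum := dterm_summable hre.le
  rw [Dinf, Complex.re_tsum hsum]
  have hterm : ∀ k : ℕ,
      ((-1 : ℂ) / ((z - 2 * (k : ℂ)) * (z - 2 * (k : ℂ) - 1))).re < 0 := by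
    intro k
    have hz : z = (z.re : ℂ) := Complex.ext rfl (by simp [him])
    rw [hz]
    have : ((-1 : ℂ) / (((z.re : ℂ) - 2 * (k : ℂ)) * ((z.re : ℂ) - 2 * (k : ℂ) - 1)))
        = (((-1 : ℝ) / ((z.re - 2 * k) * (z.re - 2 * k - 1)) : ℝ) : ℂ) := by
      push_cast
      ring
    rw [this, Complex.ofReal_re]
    apply div_neg_of_neg_of_pos (by norm_num)
    have h1 : z.re - 2 * (k : ℝ) < 0 := by nlinarith [Nat.cast_nonneg (α := ℝ) k]
    have h2 : z.re - 2 * (k : ℝ) - 1 < 0 := by linarith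
    exact mul_pos_of_neg_of_neg h1 h2
  have hsum' : Summable (fun k : ℕ =>
      ((-1 : ℂ) / ((z - 2 * (k : ℂ)) * (z - 2 * (k : ℂ) - 1))).re) :=
    (Complex.hasSum_re hsum.hasSum).summable
  have := Summable.tsum_lt_tsum (f := fun k : ℕ =>
      ((-1 : ℂ) / ((z - 2 * (k : ℂ)) * (z - 2 * (k : ℂ) - 1))).re)
      (g := fun _ : ℕ => (0 : ℝ)) (i := 0)
      (fun k => le_of_lt (hterm k)) (hterm 0) hsum' summable_zero
  simpa using this

theorem stmt13 :
    (∀ z : ℂ, z.re ≤ 0 → 0 < z.im → (Dinf z).im < 0) ∧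
    (∀ z : ℂ, z.re ≤ 0 → (∀ m : ℕ, z ≠ (m : ℂ)) → Dinf z ≠ 0) := by
  constructor
  · exact fun z hre him => im_Dinf_neg hre him
  · intro z hre hz
    rcases lt_trichotomy z.im 0 with h | h | h
    · -- conjugate case
      have hconj : Dinf z = (starRingEnd ℂ) (Dinf ((starRingEnd ℂ) z)) := by
        rw [← Dinf_conj, Complex.conj_conj]
      have hre' : ((starRingEnd ℂ) z).re ≤ 0 := by simpa using hre
      have him' : 0 < ((starRingEnd ℂ) z).im := by simp; linarith
      have hlt := im_Dinf_neg hre' him'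
      intro h0
      rw [h0] at hconj
      have : (Dinf ((starRingEnd ℂ) z)).im = 0 := by
        have := congrArg Complex.im hconj
        simp at this
        linarith [this]
      linarith
    · -- real case
      have hrene : z.re ≠ 0 := by
        intro h0
        apply hz 0
        exact Complex.ext (by simpa using h0) (by simpa using h)
      have hlt := re_Dinf_neg (lt_of_le_of_ne hre hrene) h
      intro h0
      rw [h0] at hlt
      simp at hlt
    · intro h0
      have := im_Dinf_neg hre h
      rw [h0] at this
      simp at this
end

section
/- Let (c_n) be the orthorecursive coefficients and suppose there is a constant K > 0 with |c_n| ≤ K·n^{-3/2} for all n ≥ 1. Then there is a constant C > 0 such that for all real x ≥ 1, |∑_{1 ≤ n ≤ x} c_{n−1}·(2x/(x+n))| ≤ C·x^{−3/2}. -/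
open Finset

lemma sqrt_sum_le (N : ℕ) :
    ∑ j ∈ Finset.range N, 1 / Real.sqrt (j+1) ≤ 2 * Real.sqrt N := by
  induction N with
  | zero => simp
  | succ n ih =>
    rw [Finset.sum_range_succ]
    have hb : (0:ℝ) < Real.sqrt ((n:ℝ)+1) := Real.sqrt_pos.2 (by positivity)
    have key : 1 / Real.sqrt ((n:ℝ)+1) ≤ 2 * Real.sqrt ((n:ℝ)+1) - 2 * Real.sqrt n := by
      rw [div_le_iff₀ hb]
      nlinarith [sq_nonneg (Real.sqrt ((n:ℝ)+1) - Real.sqrt n),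
        Real.sq_sqrt (show (0:ℝ) ≤ (n:ℝ)+1 by positivity),
        Real.sq_sqrt (show (0:ℝ) ≤ (n:ℝ) by positivity), Real.sqrt_nonneg (n:ℝ)]
    push_cast
    push_cast at ih
    linarith

lemma psum {c : ℕ → ℝ} {K : ℝ} (hK : 0 < K)
    (hrel : ∀ N : ℕ, 1 ≤ N →
      ∑ k ∈ Finset.range (N + 1), c k / ((N : ℝ) + (k : ℝ) + 1) = 0)
    (hb : ∀ n : ℕ, 1 ≤ n → |c n| ≤ K / ((n:ℝ) * Real.sqrt n))
    (N : ℕ) (hN : 1 ≤ N) :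
    |∑ k ∈ Finset.range (N + 1), c k| ≤ 2 * K / Real.sqrt N := by
  have h0 := hrel N hN
  have hNpos : (0:ℝ) < N := by exact_mod_cast hN
  have hNs : (0:ℝ) < Real.sqrt N := Real.sqrt_pos.2 hNpos
  have key : ∑ k ∈ Finset.range (N + 1), c k
      = ∑ k ∈ Finset.range (N + 1), c k * k / ((N:ℝ) + k + 1) := by
    have expand : ∀ k ∈ Finset.range (N+1), c k
        = c k * k / ((N:ℝ) + k + 1) + ((N:ℝ)+1) * (c k / ((N:ℝ) + k + 1)) := by
      intro k _
      have hd : ((N:ℝ) + k + 1) ≠ 0 := by positivity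
      field_simp
      ring
    rw [Finset.sum_congr rfl expand, Finset.sum_add_distrib, ← Finset.mul_sum, h0,
      mul_zero, add_zero]
  rw [key]
  have step : |∑ k ∈ Finset.range (N + 1), c k * k / ((N:ℝ) + k + 1)|
      ≤ ∑ k ∈ Finset.range (N + 1), |c k * k / ((N:ℝ) + k + 1)| :=
    Finset.abs_sum_le_sum_abs _ _
  have peel : ∑ k ∈ Finset.range (N + 1), |c k * k / ((N:ℝ) + k + 1)|
      = ∑ j ∈ Finset.range N, |c (j+1) * (j+1) / ((N:ℝ) + (j+1) + 1)| := by
    rw [Finset.sum_range_succ']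
    push_cast
    simp
  have term : ∀ j ∈ Finset.range N,
      |c (j+1) * (j+1) / ((N:ℝ) + (j+1) + 1)|
        ≤ (K / ((N:ℝ)+1)) * (1 / Real.sqrt (j+1)) := by
    intro j _
    push_cast
    have hj : (0:ℝ) < (j:ℝ)+1 := by positivity
    have hjs : (0:ℝ) < Real.sqrt ((j:ℝ)+1) := Real.sqrt_pos.2 hj
    have hcj := hb (j+1) (by omega)
    push_cast at hcj
    have hd : (0:ℝ) < (N:ℝ) + (j+1) + 1 := by positivity
    rw [abs_div, abs_of_pos hd, abs_mul, abs_of_pos hj]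
    have h2 : |c (j+1)| * ((j:ℝ)+1) ≤ (K / (((j:ℝ)+1) * Real.sqrt ((j:ℝ)+1))) * ((j:ℝ)+1) := by
      gcongr
    calc |c (j+1)| * ((j:ℝ)+1) / ((N:ℝ) + ((j:ℝ)+1) + 1)
        ≤ (K / (((j:ℝ)+1) * Real.sqrt ((j:ℝ)+1))) * ((j:ℝ)+1) / ((N:ℝ)+1) := by
          gcongr
          linarith
      _ = (K / ((N:ℝ)+1)) * (1 / Real.sqrt ((j:ℝ)+1)) := by
          field_simp
  have sum2 : ∑ j ∈ Finset.range N, (K / ((N:ℝ)+1)) * (1 / Real.sqrt (j+1))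
      ≤ (K / ((N:ℝ)+1)) * (2 * Real.sqrt N) := by
    rw [← Finset.mul_sum]
    have := sqrt_sum_le N
    gcongr
  have final : (K / ((N:ℝ)+1)) * (2 * Real.sqrt N) ≤ 2 * K / Real.sqrt N := by
    rw [div_mul_eq_mul_div, div_le_div_iff₀ (by positivity) hNs]
    have h2 : Real.sqrt (N:ℝ) * Real.sqrt (N:ℝ) = (N:ℝ) := Real.mul_self_sqrt hNpos.le
    nlinarith
  calc |∑ k ∈ Finset.range (N + 1), c k * k / ((N:ℝ) + k + 1)|
      ≤ ∑ k ∈ Finset.range (N + 1), |c k * k / ((N:ℝ) + k + 1)| := step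
    _ = ∑ j ∈ Finset.range N, |c (j+1) * (j+1) / ((N:ℝ) + (j+1) + 1)| := peel
    _ ≤ ∑ j ∈ Finset.range N, (K / ((N:ℝ)+1)) * (1 / Real.sqrt (j+1)) :=
        Finset.sum_le_sum term
    _ ≤ (K / ((N:ℝ)+1)) * (2 * Real.sqrt N) := sum2
    _ ≤ 2 * K / Real.sqrt N := final

lemma vstep {b a : ℝ} (hb0 : 2 ≤ b) (hab : b ≤ a) :
    1 / (a*b) - 1 / ((a+1)*(b+1)) ≤ 2 / b^3 := by
  have hbpos : (0:ℝ) < b := by linarith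
  have hapos : (0:ℝ) < a := by linarith
  rw [div_sub_div _ _ (by positivity) (by positivity),
    div_le_div_iff₀ (by positivity) (by positivity)]
  nlinarith [mul_nonneg (mul_nonneg (sub_nonneg.2 hab) hbpos.le)
      (mul_nonneg hbpos.le hbpos.le),
    mul_nonneg (mul_nonneg (sub_nonneg.2 hab) hapos.le)
      (mul_nonneg hbpos.le hbpos.le),
    mul_nonneg (mul_nonneg (by linarith : (0:ℝ) ≤ 2*a - b) hbpos.le) hbpos.le,
    mul_pos hapos hbpos, mul_pos (mul_pos hapos hbpos) hbpos]

lemma rpow_neg32 {t : ℝ} (ht : 0 < t) :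
    t ^ (-(3 : ℝ) / 2) = 1 / (t * Real.sqrt t) := by
  rw [show (-(3:ℝ)/2) = -(1+1/2) by norm_num, Real.rpow_neg ht.le,
    Real.rpow_add ht, Real.rpow_one, ← Real.sqrt_eq_rpow, one_div]

lemma Cbound {c : ℕ → ℝ} {K : ℝ} (hK : 0 < K) (h0 : c 0 = 1)
    (hrel : ∀ N : ℕ, 1 ≤ N →
      ∑ k ∈ Finset.range (N + 1), c k / ((N : ℝ) + (k : ℝ) + 1) = 0)
    (hb : ∀ n : ℕ, 1 ≤ n → |c n| ≤ K / ((n:ℝ) * Real.sqrt n)) :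
    ∀ m : ℕ, 1 ≤ m → |∑ k ∈ Finset.range m, c k| ≤ (1 + 4*K) / Real.sqrt m := by
  intro m hm
  match m, hm with
  | 1, _ => simp [h0]; nlinarith
  | (N+2), _ =>
    have hN : 1 ≤ N + 1 := by omega
    have h1 := psum hK hrel hb (N+1) hN
    have hNp : (0:ℝ) < (N:ℝ)+1 := by positivity
    have hs1 : (0:ℝ) < Real.sqrt ((N:ℝ)+1) := Real.sqrt_pos.2 hNp
    have hs2 : (0:ℝ) < Real.sqrt ((N:ℝ)+2) := Real.sqrt_pos.2 (by positivity)
    have hle : Real.sqrt ((N:ℝ)+2) ≤ 2 * Real.sqrt ((N:ℝ)+1) := by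
      rw [show 2 * Real.sqrt ((N:ℝ)+1) = Real.sqrt (4*((N:ℝ)+1)) by
        rw [show (4:ℝ)*((N:ℝ)+1) = (2*Real.sqrt ((N:ℝ)+1))^2 by
          rw [mul_pow, Real.sq_sqrt hNp.le]; norm_num]
        rw [Real.sqrt_sq (by positivity)]]
      exact Real.sqrt_le_sqrt (by linarith)
    have key : 2 * K / Real.sqrt ((N:ℝ)+1) ≤ (1 + 4*K) / Real.sqrt ((N:ℝ)+2) := by
      rw [div_le_div_iff₀ hs1 hs2]
      nlinarith
    calc |∑ k ∈ Finset.range (N+2), c k| ≤ 2 * K / Real.sqrt ((N+1 : ℕ):ℝ) := h1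
      _ = 2 * K / Real.sqrt ((N:ℝ)+1) := by push_cast; ring_nf
      _ ≤ (1 + 4*K) / Real.sqrt ((N:ℝ)+2) := key
      _ = (1 + 4*K) / Real.sqrt (((N+2:ℕ)):ℝ) := by push_cast; ring_nf

lemma Tbound {c : ℕ → ℝ} {L x : ℝ} {M : ℕ}
    (hM1 : 1 ≤ M) (hMx : (M:ℝ) ≤ x) (hL : 0 < L)
    (hCs : ∀ m : ℕ, 1 ≤ m → |∑ k ∈ Finset.range m, c k| ≤ L / Real.sqrt m) :
    |∑ i ∈ Finset.range M, (1 / ((x+(i:ℝ)+1)*((M:ℝ)+(i:ℝ)+1))) * c i|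
      ≤ 5 * L / ((M:ℝ)^2 * Real.sqrt M) := by
  have hMr : (1:ℝ) ≤ (M:ℝ) := by exact_mod_cast hM1
  have hMpos : (0:ℝ) < (M:ℝ) := by linarith
  have hsM : (0:ℝ) < Real.sqrt M := Real.sqrt_pos.2 hMpos
  have hmsM : Real.sqrt (M:ℝ) * Real.sqrt (M:ℝ) = (M:ℝ) := Real.mul_self_sqrt hMpos.le
  set v : ℕ → ℝ := fun i => 1 / ((x+(i:ℝ)+1)*((M:ℝ)+(i:ℝ)+1)) with hvdef
  set Cs : ℕ → ℝ := fun m => ∑ k ∈ Finset.range m, c k with hCsdef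
  have habel : ∑ i ∈ Finset.range M, v i * c i = v (M-1) * Cs M
      - ∑ i ∈ Finset.range (M-1), (v (i+1) - v i) * Cs (i+1) := by
    have := Finset.sum_range_by_parts v c M
    simpa [smul_eq_mul] using this
  -- boundary term
  have hcast : ((M - 1 : ℕ):ℝ) = (M:ℝ) - 1 := by push_cast [hM1]; ring
  have hv : v (M-1) = 1 / ((x + (M:ℝ) - 1 + 1) * ((M:ℝ) + ((M:ℝ)-1) + 1)) := by
    show (1:ℝ) / ((x+((M-1:ℕ):ℝ)+1)*((M:ℝ)+((M-1:ℕ):ℝ)+1)) = _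
    rw [hcast]; ring_nf
  have hvb : |v (M-1)| ≤ 1 / (4 * (M:ℝ)^2) := by
    have hd : (0:ℝ) < (x + (M:ℝ) - 1 + 1) * ((M:ℝ) + ((M:ℝ)-1) + 1) := by nlinarith
    rw [hv, abs_of_pos (by positivity <;> nlinarith)]
    apply div_le_div₀ (by positivity) le_rfl (by positivity)
    nlinarith
  have htop : |v (M-1) * Cs M| ≤ L / (4 * ((M:ℝ)^2 * Real.sqrt M)) := by
    calc |v (M-1) * Cs M| = |v (M-1)| * |Cs M| := abs_mul _ _
      _ ≤ (1 / (4 * (M:ℝ)^2)) * (L / Real.sqrt M) := by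
          apply mul_le_mul hvb (hCs M hM1) (abs_nonneg _) (by positivity)
      _ = L / (4 * ((M:ℝ)^2 * Real.sqrt M)) := by
          rw [div_mul_div_comm, one_mul]
          congr 1
          ring
  -- difference terms
  have hterm : ∀ i ∈ Finset.range (M-1),
      |(v (i+1) - v i) * Cs (i+1)| ≤ (2 * L / (M:ℝ)^3) * (1 / Real.sqrt ((i:ℝ)+1)) := by
    intro i _
    have hb0 : (2:ℝ) ≤ (M:ℝ)+(i:ℝ)+1 := by
      have : (0:ℝ) ≤ (i:ℝ) := by positivity
      linarith
    have hab : (M:ℝ)+(i:ℝ)+1 ≤ x+(i:ℝ)+1 := by linarith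
    have hbpos : (0:ℝ) < (M:ℝ)+(i:ℝ)+1 := by linarith
    have hapos : (0:ℝ) < x+(i:ℝ)+1 := by linarith
    have hvi : v i = 1 / ((x+(i:ℝ)+1) * ((M:ℝ)+(i:ℝ)+1)) := rfl
    have hvi1 : v (i+1) = 1 / ((x+(i:ℝ)+1+1) * ((M:ℝ)+(i:ℝ)+1+1)) := by
      show (1:ℝ) / ((x+((i+1:ℕ):ℝ)+1)*((M:ℝ)+((i+1:ℕ):ℝ)+1)) = _
      push_cast; ring_nf
    have hmono : v (i+1) ≤ v i := by
      rw [hvi, hvi1]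
      apply one_div_le_one_div_of_le (by positivity)
      nlinarith
    have habs : |v (i+1) - v i| = v i - v (i+1) := by
      rw [abs_sub_comm, abs_of_nonneg (by linarith)]
    have hd2 : v i - v (i+1) ≤ 2 / ((M:ℝ)+(i:ℝ)+1)^3 := by
      rw [hvi, hvi1]
      exact vstep hb0 hab
    have hb3 : 2 / ((M:ℝ)+(i:ℝ)+1)^3 ≤ 2 / (M:ℝ)^3 := by
      apply div_le_div₀ (by norm_num) le_rfl (by positivity)
      have hi0 : (0:ℝ) ≤ (i:ℝ) := by positivity
      exact pow_le_pow_left₀ hMpos.le (by linarith) 3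
    have hCi : |Cs (i+1)| ≤ L / Real.sqrt ((i:ℝ)+1) := by
      have h := hCs (i+1) (by omega)
      have : (((i+1:ℕ)):ℝ) = (i:ℝ)+1 := by push_cast; ring
      rwa [this] at h
    calc |(v (i+1) - v i) * Cs (i+1)| = |v (i+1) - v i| * |Cs (i+1)| := abs_mul _ _
      _ ≤ (2 / (M:ℝ)^3) * (L / Real.sqrt ((i:ℝ)+1)) := by
          apply mul_le_mul _ hCi (abs_nonneg _) (by positivity)
          rw [habs]; linarith
      _ = (2 * L / (M:ℝ)^3) * (1 / Real.sqrt ((i:ℝ)+1)) := by ring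
  have hsumdiff : ∑ i ∈ Finset.range (M-1), |(v (i+1) - v i) * Cs (i+1)|
      ≤ 4 * L / ((M:ℝ)^2 * Real.sqrt M) := by
    calc ∑ i ∈ Finset.range (M-1), |(v (i+1) - v i) * Cs (i+1)|
        ≤ ∑ i ∈ Finset.range (M-1), (2 * L / (M:ℝ)^3) * (1 / Real.sqrt ((i:ℝ)+1)) :=
          Finset.sum_le_sum hterm
      _ = (2 * L / (M:ℝ)^3) * ∑ i ∈ Finset.range (M-1), (1 / Real.sqrt ((i:ℝ)+1)) := by
          rw [Finset.mul_sum]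
      _ ≤ (2 * L / (M:ℝ)^3) * (2 * Real.sqrt ((M-1 : ℕ):ℝ)) := by
          have h := sqrt_sum_le (M-1)
          have h2 : ∑ i ∈ Finset.range (M-1), (1 / Real.sqrt ((i:ℝ)+1))
              = ∑ j ∈ Finset.range (M-1), 1 / Real.sqrt ((j:ℝ)+1) := rfl
          gcongr
      _ ≤ (2 * L / (M:ℝ)^3) * (2 * Real.sqrt M) := by
          gcongr
          exact_mod_cast Nat.sub_le M 1
      _ = 4 * L / ((M:ℝ)^2 * Real.sqrt M) := by
          rw [div_mul_eq_mul_div, div_eq_div_iff (by positivity) (by positivity)]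
          linear_combination (4*L*(M:ℝ)^2) * hmsM
  rw [habel]
  calc |v (M-1) * Cs M - ∑ i ∈ Finset.range (M-1), (v (i+1) - v i) * Cs (i+1)|
      ≤ |v (M-1) * Cs M| + |∑ i ∈ Finset.range (M-1), (v (i+1) - v i) * Cs (i+1)| :=
        abs_sub _ _
    _ ≤ L / (4 * ((M:ℝ)^2 * Real.sqrt M)) +
        ∑ i ∈ Finset.range (M-1), |(v (i+1) - v i) * Cs (i+1)| := by
        gcongr
        exact Finset.abs_sum_le_sum_abs _ _
    _ ≤ L / (4 * ((M:ℝ)^2 * Real.sqrt M)) + 4 * L / ((M:ℝ)^2 * Real.sqrt M) := by linarith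
    _ ≤ 5 * L / ((M:ℝ)^2 * Real.sqrt M) := by
        have h5 : 5 * L / ((M:ℝ)^2 * Real.sqrt M)
            = L / ((M:ℝ)^2 * Real.sqrt M) + 4 * L / ((M:ℝ)^2 * Real.sqrt M) := by ring
        rw [h5]
        have : L / (4 * ((M:ℝ)^2 * Real.sqrt M)) ≤ L / ((M:ℝ)^2 * Real.sqrt M) := by
          apply div_le_div₀ hL.le le_rfl (by positivity)
          nlinarith
        linarith

/-- `c` is the orthorecursive coefficient sequence: `c 0 = 1` and
`∑_{k=0}^{N} c_k/(N+k+1) = 0` for every `N ≥ 1`. -/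
def IsOrthoCoeff (c : ℕ → ℝ) : Prop :=
  c 0 = 1 ∧ ∀ N : ℕ, 1 ≤ N →
    ∑ k ∈ Finset.range (N + 1), c k / ((N : ℝ) + (k : ℝ) + 1) = 0

theorem stmt18 (c : ℕ → ℝ) (hc : IsOrthoCoeff c)
    (K : ℝ) (hK : 0 < K)
    (hbound : ∀ n : ℕ, 1 ≤ n → |c n| ≤ K * (n : ℝ) ^ (-(3 : ℝ) / 2)) :
    ∃ C > 0, ∀ x : ℝ, 1 ≤ x →
      |∑ n ∈ Finset.Icc 1 ⌊x⌋₊, c (n - 1) * (2 * x / (x + (n : ℝ)))| ≤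
        C * x ^ (-(3 : ℝ) / 2) := by
  obtain ⟨h0, hrel⟩ := hc
  have hb : ∀ n : ℕ, 1 ≤ n → |c n| ≤ K / ((n:ℝ) * Real.sqrt n) := by
    intro n hn
    have hpos : (0:ℝ) < n := by exact_mod_cast hn
    calc |c n| ≤ K * ((n:ℝ)) ^ (-(3 : ℝ) / 2) := hbound n hn
      _ = K / ((n:ℝ) * Real.sqrt n) := by rw [rpow_neg32 hpos]; ring
  have hL : (0:ℝ) < 1 + 4*K := by positivity
  have hKL : K ≤ 1 + 4*K := by nlinarith
  refine ⟨72 * (1 + 4*K), by positivity, ?_⟩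
  intro x hx
  have hxpos : (0:ℝ) < x := by linarith
  have hM1 : 1 ≤ ⌊x⌋₊ := Nat.le_floor (by exact_mod_cast hx)
  have hMx : ((⌊x⌋₊:ℕ):ℝ) ≤ x := Nat.floor_le hxpos.le
  have hxM : x < ((⌊x⌋₊:ℕ):ℝ) + 1 := Nat.lt_floor_add_one x
  set M : ℕ := ⌊x⌋₊ with hMdef
  have hMr : (1:ℝ) ≤ (M:ℝ) := by exact_mod_cast hM1
  have hMpos : (0:ℝ) < (M:ℝ) := by linarith
  have hsM : (0:ℝ) < Real.sqrt M := Real.sqrt_pos.2 hMpos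
  have hmsM : Real.sqrt (M:ℝ) * Real.sqrt (M:ℝ) = (M:ℝ) := Real.mul_self_sqrt hMpos.le
  have hP : (0:ℝ) < (M:ℝ)^2 * Real.sqrt M := by positivity
  -- rewrite the target sum
  have hsum : ∑ n ∈ Finset.Icc 1 M, c (n-1) * (2 * x / (x + (n:ℝ)))
      = 2 * x * ∑ k ∈ Finset.range M, c k / (x + (k:ℝ) + 1) := by
    rw [← Finset.Ico_add_one_right_eq_Icc, Finset.sum_Ico_eq_sum_range, Finset.mul_sum]
    have hMM : M + 1 - 1 = M := by omega
    rw [hMM]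
    refine Finset.sum_congr rfl fun i _ => ?_
    have h1 : 1 + i - 1 = i := by omega
    rw [h1]
    push_cast
    have hd : x + (1 + (i:ℝ)) ≠ 0 := by positivity
    have hd2 : x + (i:ℝ) + 1 ≠ 0 := by positivity
    field_simp
    ring
  -- relation at N = M
  have hSM : ∑ k ∈ Finset.range M, c k / ((M:ℝ) + (k:ℝ) + 1)
      = -(c M / ((M:ℝ) + (M:ℝ) + 1)) := by
    have h := hrel M hM1
    rw [Finset.sum_range_succ] at h
    linarith
  have hSMb : |∑ k ∈ Finset.range M, c k / ((M:ℝ) + (k:ℝ) + 1)|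
      ≤ K / (2 * ((M:ℝ)^2 * Real.sqrt M)) := by
    rw [hSM, abs_neg, abs_div, abs_of_pos (by positivity : (0:ℝ) < (M:ℝ)+(M:ℝ)+1)]
    have h1 : |c M| ≤ K / ((M:ℝ) * Real.sqrt M) := hb M hM1
    calc |c M| / ((M:ℝ)+(M:ℝ)+1) ≤ (K / ((M:ℝ) * Real.sqrt M)) / (2*(M:ℝ)) := by
          apply div_le_div₀ (by positivity) h1 (by positivity)
          linarith
      _ = K / (2 * ((M:ℝ)^2 * Real.sqrt M)) := by
          rw [div_div]
          congr 1
          ring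
  -- S in terms of SM and T
  have hdiff : ∑ k ∈ Finset.range M, c k / (x + (k:ℝ) + 1)
      = (∑ k ∈ Finset.range M, c k / ((M:ℝ) + (k:ℝ) + 1))
        + ((M:ℝ) - x) * ∑ i ∈ Finset.range M, (1 / ((x+(i:ℝ)+1)*((M:ℝ)+(i:ℝ)+1))) * c i := by
    rw [Finset.mul_sum, ← Finset.sum_add_distrib]
    refine Finset.sum_congr rfl fun k _ => ?_
    have hd1 : x + (k:ℝ) + 1 ≠ 0 := by positivity
    have hd2 : (M:ℝ) + (k:ℝ) + 1 ≠ 0 := by positivity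
    field_simp
    ring
  have hCs : ∀ m : ℕ, 1 ≤ m → |∑ k ∈ Finset.range m, c k| ≤ (1 + 4*K) / Real.sqrt m :=
    Cbound hK h0 hrel hb
  have hT := Tbound hM1 hMx hL hCs
  -- bound on S
  have hS : |∑ k ∈ Finset.range M, c k / (x + (k:ℝ) + 1)|
      ≤ 6 * (1 + 4*K) / ((M:ℝ)^2 * Real.sqrt M) := by
    rw [hdiff]
    have habs1 : |(M:ℝ) - x| ≤ 1 := by
      rw [abs_sub_comm, abs_of_nonneg (by linarith)]
      linarith
    calc |(∑ k ∈ Finset.range M, c k / ((M:ℝ) + (k:ℝ) + 1))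
        + ((M:ℝ) - x) * ∑ i ∈ Finset.range M, (1 / ((x+(i:ℝ)+1)*((M:ℝ)+(i:ℝ)+1))) * c i|
        ≤ |∑ k ∈ Finset.range M, c k / ((M:ℝ) + (k:ℝ) + 1)|
          + |(M:ℝ) - x| * |∑ i ∈ Finset.range M, (1 / ((x+(i:ℝ)+1)*((M:ℝ)+(i:ℝ)+1))) * c i| := by
          rw [← abs_mul]
          exact abs_add_le _ _
      _ ≤ K / (2 * ((M:ℝ)^2 * Real.sqrt M))
          + 1 * (5 * (1 + 4*K) / ((M:ℝ)^2 * Real.sqrt M)) := by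
          apply add_le_add hSMb
          exact mul_le_mul habs1 hT (abs_nonneg _) (by norm_num)
      _ ≤ 6 * (1 + 4*K) / ((M:ℝ)^2 * Real.sqrt M) := by
          rw [one_mul]
          have he : 6 * (1 + 4*K) / ((M:ℝ)^2 * Real.sqrt M)
              = (1 + 4*K) / ((M:ℝ)^2 * Real.sqrt M)
                + 5 * (1 + 4*K) / ((M:ℝ)^2 * Real.sqrt M) := by ring
          rw [he]
          have h2 : K / (2 * ((M:ℝ)^2 * Real.sqrt M)) ≤ (1 + 4*K) / ((M:ℝ)^2 * Real.sqrt M) := by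
            apply div_le_div₀ hL.le hKL (by positivity)
            nlinarith
          linarith
  -- final assembly
  have hsx : (0:ℝ) < Real.sqrt x := Real.sqrt_pos.2 hxpos
  have hmsx : Real.sqrt x * Real.sqrt x = x := Real.mul_self_sqrt hxpos.le
  rw [hsum, rpow_neg32 hxpos]
  have h2x : |2 * x * ∑ k ∈ Finset.range M, c k / (x + (k:ℝ) + 1)|
      = 2 * x * |∑ k ∈ Finset.range M, c k / (x + (k:ℝ) + 1)| := by
    rw [abs_mul, abs_of_pos (by positivity : (0:ℝ) < 2*x)]
  rw [h2x]
  have step1 : 2 * x * |∑ k ∈ Finset.range M, c k / (x + (k:ℝ) + 1)|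
      ≤ 2 * (2*(M:ℝ)) * (6 * (1 + 4*K) / ((M:ℝ)^2 * Real.sqrt M)) := by
    apply mul_le_mul _ hS (abs_nonneg _) (by positivity)
    linarith
  have step2 : 2 * (2*(M:ℝ)) * (6 * (1 + 4*K) / ((M:ℝ)^2 * Real.sqrt M))
      = 24 * (1 + 4*K) / ((M:ℝ) * Real.sqrt M) := by
    rw [eq_div_iff (by positivity : ((M:ℝ) * Real.sqrt M) ≠ 0)]
    field_simp
    ring
  have hxle : x * Real.sqrt x ≤ 3 * ((M:ℝ) * Real.sqrt M) := by
    have h2M : x ≤ 2 * (M:ℝ) := by linarith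
    have hs32 : Real.sqrt x ≤ (3/2) * Real.sqrt M := by
      rw [show (3/2) * Real.sqrt (M:ℝ) = Real.sqrt ((9/4)*(M:ℝ)) by
        rw [show (9/4)*(M:ℝ) = ((3/2) * Real.sqrt (M:ℝ))^2 by
          rw [mul_pow, Real.sq_sqrt hMpos.le]; norm_num]
        rw [Real.sqrt_sq (by positivity)]]
      exact Real.sqrt_le_sqrt (by linarith)
    calc x * Real.sqrt x ≤ (2*(M:ℝ)) * ((3/2) * Real.sqrt M) := by
          apply mul_le_mul h2M hs32 (Real.sqrt_nonneg _) (by positivity)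
      _ = 3 * ((M:ℝ) * Real.sqrt M) := by ring
  have step3 : 24 * (1 + 4*K) / ((M:ℝ) * Real.sqrt M)
      ≤ 72 * (1 + 4*K) * (1 / (x * Real.sqrt x)) := by
    rw [mul_one_div, div_le_div_iff₀ (by positivity) (by positivity)]
    nlinarith
  linarith
end

section
/- Let (c_n) be the orthorecursive coefficients. Suppose there exist a real α > 1 and a constant K > 0 such that |∑_{k=0}^{N} c_k| ≤ K·N^{−α} for all integers N ≥ 1. Then there exists a constant C > 0 such that |c_N| ≤ C·N^{−2} for all integers N ≥ 1. -/
open Finset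

lemma key (c : ℕ → ℝ) (hc : IsOrthoCoeff c) (M : ℕ) (hM : 1 ≤ M) :
    c (M + 1) = (2 * (M : ℝ) + 3) *
      ∑ k ∈ Finset.range (M + 1),
        (1 / (((M : ℝ) + k + 1) * ((M : ℝ) + k + 2))) * c k := by
  have h1 := hc.2 (M + 1) (by omega)
  have h2 := hc.2 M hM
  rw [Finset.sum_range_succ] at h1
  push_cast at h1
  have e1 : ∑ k ∈ Finset.range (M+1), c k / ((M:ℝ) + 1 + k + 1)
      = ∑ k ∈ Finset.range (M+1), c k / ((M:ℝ) + k + 2) := by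
    apply Finset.sum_congr rfl; intro k _; ring_nf
  rw [e1] at h1
  have e2 : ∑ k ∈ Finset.range (M+1),
      (1 / (((M : ℝ) + k + 1) * ((M : ℝ) + k + 2))) * c k
      = ∑ k ∈ Finset.range (M+1), (c k / ((M:ℝ) + k + 1) - c k / ((M:ℝ) + k + 2)) := by
    apply Finset.sum_congr rfl; intro k _
    have p1 : (0:ℝ) < (M:ℝ) + k + 1 := by positivity
    have p2 : (0:ℝ) < (M:ℝ) + k + 2 := by positivity
    field_simp
    ring
  rw [e2, Finset.sum_sub_distrib, h2]
  have p3 : ((M:ℝ) + 1 + ((M:ℝ) + 1) + 1) ≠ 0 := by positivity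
  have h1' : c (M+1) = -(2*(M:ℝ)+3) * ∑ k ∈ Finset.range (M+1), c k / ((M:ℝ) + k + 2) := by
    field_simp at h1
    nlinarith [h1]
  rw [h1']; ring

theorem stmt19 (c : ℕ → ℝ) (hc : IsOrthoCoeff c)
    (α K : ℝ) (hα : 1 < α) (hK : 0 < K)
    (hbound : ∀ N : ℕ, 1 ≤ N →
      |∑ k ∈ Finset.range (N + 1), c k| ≤ K * (N : ℝ) ^ (-α)) :
    ∃ C > 0, ∀ N : ℕ, 1 ≤ N → |c N| ≤ C * (N : ℝ) ^ (-(2 : ℝ)) := by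
  set g : ℕ → ℝ := fun n => K * (n:ℝ) ^ (-α) + (if n = 0 then 1 else 0) with hgdef
  have hαsum : Summable (fun n : ℕ => (n:ℝ) ^ (-α)) :=
    Real.summable_nat_rpow.2 (by linarith)
  have hind : Summable (fun n : ℕ => (if n = 0 then (1:ℝ) else 0)) := by
    apply summable_of_ne_finset_zero (s := {0})
    intro n hn
    simp only [Finset.mem_singleton] at hn
    simp [hn]
  have hg : Summable g := (hαsum.mul_left K).add hind
  have hgnn : ∀ n, 0 ≤ g n := by
    intro n
    have : (0:ℝ) ≤ (n:ℝ) ^ (-α) := Real.rpow_nonneg (Nat.cast_nonneg n) _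
    by_cases h : n = 0 <;> simp [hgdef, h] <;> positivity
  have hSg : ∀ n : ℕ, |∑ k ∈ Finset.range (n+1), c k| ≤ g n := by
    intro n
    rcases Nat.eq_zero_or_pos n with h | h
    · subst h
      simp only [hgdef, Nat.cast_zero]
      rw [Real.zero_rpow (by linarith : -α ≠ 0)]
      simp [hc.1]
    · have := hbound n h
      simp only [hgdef, if_neg (Nat.pos_iff_ne_zero.mp h)]
      linarith
  set Z : ℝ := ∑' n, g n with hZdef
  have hZnn : 0 ≤ Z := tsum_nonneg hgnn
  have hZ : ∀ m : ℕ, ∑ i ∈ Finset.range m, g i ≤ Z :=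
    fun m => Summable.sum_le_tsum (Finset.range m) (fun i _ => hgnn i) hg
  refine ⟨6 * (K + Z) + |c 1| + 1, by positivity, ?_⟩
  intro N hN
  have hrpow : (N:ℝ) ^ (-(2:ℝ)) = ((N:ℝ)^2)⁻¹ := by
    rw [Real.rpow_neg (Nat.cast_nonneg N),
      show ((2:ℝ)) = ((2:ℕ):ℝ) by norm_num, Real.rpow_natCast]
  rcases Nat.lt_or_ge N 2 with h2 | h2
  · interval_cases N
    rw [hrpow]
    norm_num
    nlinarith [abs_nonneg (c 1)]
  · obtain ⟨M, rfl⟩ : ∃ M, N = M + 1 := ⟨N - 1, by omega⟩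
    have hM : 1 ≤ M := by omega
    have hMR : (1:ℝ) ≤ (M:ℝ) := by exact_mod_cast hM
    set d : ℕ → ℝ := fun i => 1 / (((M : ℝ) + i + 1) * ((M : ℝ) + i + 2)) with hddef
    have habel := Finset.sum_range_by_parts d c (M+1)
    simp only [smul_eq_mul, Nat.add_sub_cancel] at habel
    have hkey := key c hc M hM
    rw [habel] at hkey
    have hNpos : (0:ℝ) < (M:ℝ) + 1 := by positivity
    have hb1 : |d M * ∑ i ∈ Finset.range (M+1), c i| ≤ 2 * K / ((M:ℝ)+1)^3 := by
      rw [abs_mul]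
      have hdM : |d M| ≤ 1 / ((M:ℝ)+1)^2 := by
        rw [hddef]
        rw [abs_of_nonneg (by positivity)]
        rw [div_le_div_iff₀ (by positivity) (by positivity)]
        nlinarith
      have hSM : |∑ i ∈ Finset.range (M+1), c i| ≤ 2 * K / ((M:ℝ)+1) := by
        have h1 := hbound M hM
        have h2 : (M:ℝ) ^ (-α) ≤ (M:ℝ) ^ (-(1:ℝ)) :=
          Real.rpow_le_rpow_of_exponent_le hMR (by linarith)
        have h3 : (M:ℝ) ^ (-(1:ℝ)) = ((M:ℝ))⁻¹ := by
          rw [Real.rpow_neg (by positivity), Real.rpow_one]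
        have h4 : ((M:ℝ))⁻¹ ≤ 2 / ((M:ℝ)+1) := by
          rw [inv_eq_one_div, div_le_div_iff₀ (by linarith) (by positivity)]
          linarith
        calc |∑ i ∈ Finset.range (M+1), c i| ≤ K * (M:ℝ)^(-α) := h1
          _ ≤ K * (2 / ((M:ℝ)+1)) := by
              rw [h3] at h2
              exact mul_le_mul_of_nonneg_left (h2.trans h4) hK.le
          _ = 2 * K / ((M:ℝ)+1) := by ring
      calc |d M| * |∑ i ∈ Finset.range (M+1), c i|
          ≤ (1 / ((M:ℝ)+1)^2) * (2 * K / ((M:ℝ)+1)) := by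
            apply mul_le_mul hdM hSM (abs_nonneg _) (by positivity)
        _ = 2 * K / ((M:ℝ)+1)^3 := by field_simp
    have hb2 : |∑ i ∈ Finset.range M, (d (i+1) - d i) * ∑ j ∈ Finset.range (i+1), c j|
        ≤ 2 * Z / ((M:ℝ)+1)^3 := by
      calc |∑ i ∈ Finset.range M, (d (i+1) - d i) * ∑ j ∈ Finset.range (i+1), c j|
          ≤ ∑ i ∈ Finset.range M, |(d (i+1) - d i) * ∑ j ∈ Finset.range (i+1), c j| :=
            Finset.abs_sum_le_sum_abs _ _
        _ ≤ ∑ i ∈ Finset.range M, (2 / ((M:ℝ)+1)^3) * g i := by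
            apply Finset.sum_le_sum
            intro i _
            rw [abs_mul]
            have hdd : |d (i+1) - d i| ≤ 2 / ((M:ℝ)+1)^3 := by
              have hx : ((M:ℝ)+1) ≤ (M:ℝ)+i+1 := by
                have : (0:ℝ) ≤ (i:ℝ) := Nat.cast_nonneg i
                linarith
              have heq : d (i+1) - d i
                  = -(2 / (((M:ℝ)+i+1) * ((M:ℝ)+i+2) * ((M:ℝ)+i+3))) := by
                rw [hddef]
                push_cast
                have p1 : ((M:ℝ)+i+1) ≠ 0 := by positivity
                have p2 : ((M:ℝ)+i+2) ≠ 0 := by positivity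
                have p3 : ((M:ℝ)+i+3) ≠ 0 := by positivity
                field_simp
                ring
              rw [heq, abs_neg, abs_of_nonneg (by positivity)]
              have hi : (0:ℝ) ≤ (i:ℝ) := Nat.cast_nonneg i
              have ha : (0:ℝ) ≤ (M:ℝ) + 1 := by positivity
              have h3 : ((M:ℝ)+1)^3 ≤ ((M:ℝ)+i+1) * ((M:ℝ)+i+2) * ((M:ℝ)+i+3) := by
                nlinarith [mul_nonneg (mul_nonneg ha ha) hi, mul_nonneg (mul_nonneg ha hi) hi,
                  mul_nonneg (mul_nonneg hi hi) hi, mul_nonneg ha hi, mul_nonneg hi hi,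
                  mul_nonneg ha ha]
              gcongr
            exact mul_le_mul hdd (hSg i) (abs_nonneg _) (by positivity)
        _ = (2 / ((M:ℝ)+1)^3) * ∑ i ∈ Finset.range M, g i := by
            rw [Finset.mul_sum]
        _ ≤ (2 / ((M:ℝ)+1)^3) * Z := by
            apply mul_le_mul_of_nonneg_left (hZ M) (by positivity)
        _ = 2 * Z / ((M:ℝ)+1)^3 := by ring
    have hc2 : |c (M+1)| ≤ (2*(M:ℝ)+3) * (2*K/((M:ℝ)+1)^3 + 2*Z/((M:ℝ)+1)^3) := by
      rw [hkey, abs_mul, abs_of_nonneg (by positivity : (0:ℝ) ≤ 2*(M:ℝ)+3)]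
      apply mul_le_mul_of_nonneg_left _ (by positivity)
      calc |d M * ∑ i ∈ Finset.range (M+1), c i
              - ∑ i ∈ Finset.range M, (d (i+1) - d i) * ∑ j ∈ Finset.range (i+1), c j|
          ≤ |d M * ∑ i ∈ Finset.range (M+1), c i|
            + |∑ i ∈ Finset.range M, (d (i+1) - d i) * ∑ j ∈ Finset.range (i+1), c j| :=
            abs_sub _ _
        _ ≤ 2*K/((M:ℝ)+1)^3 + 2*Z/((M:ℝ)+1)^3 := add_le_add hb1 hb2
    have hfin : (2*(M:ℝ)+3) * (2*K/((M:ℝ)+1)^3 + 2*Z/((M:ℝ)+1)^3)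
        ≤ (6 * (K + Z) + |c 1| + 1) * (((M:ℝ)+1)^2)⁻¹ := by
      have ha : (0:ℝ) ≤ |c 1| := abs_nonneg _
      have hKZ : (0:ℝ) ≤ K + Z := by linarith
      have hMn : (0:ℝ) ≤ (M:ℝ) := Nat.cast_nonneg M
      have e : (2*(M:ℝ)+3) * (2*K/((M:ℝ)+1)^3 + 2*Z/((M:ℝ)+1)^3)
          = ((2*(M:ℝ)+3)*(2*K+2*Z)) / ((M:ℝ)+1)^3 := by ring
      have e2 : (6*(K+Z)+|c 1|+1) * (((M:ℝ)+1)^2)⁻¹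
          = (6*(K+Z)+|c 1|+1) / ((M:ℝ)+1)^2 := by ring
      rw [e, e2, div_le_div_iff₀ (by positivity) (by positivity)]
      have step : (2*(M:ℝ)+3)*(2*K+2*Z) ≤ (6*(K+Z)+|c 1|+1) * ((M:ℝ)+1) := by
        nlinarith [mul_nonneg hKZ hMn]
      calc (2*(M:ℝ)+3)*(2*K+2*Z) * ((M:ℝ)+1)^2
          ≤ ((6*(K+Z)+|c 1|+1) * ((M:ℝ)+1)) * ((M:ℝ)+1)^2 :=
            mul_le_mul_of_nonneg_right step (by positivity)
        _ = (6*(K+Z)+|c 1|+1) * ((M:ℝ)+1)^3 := by ring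
    rw [hrpow]
    push_cast
    exact hc2.trans hfin
end
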